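/- arXiv:2602.24165 — 2 statements merged into one kernel-verified Lean document; each statement's English description precedes it below -/
import Mathlib

section
/- Let X be a measurable space, W a set, and Φ : W → (probability measures on X), w ↦ P_w, a parameterization into a family dominated by a σ-finite measure μ. Let f : W → ℝ^k be an identifiable observable, i.e., there exists T : (probability measures on X) → ℝ^k with f(w) = T(P_w) for all w. Let A, B ⊆ ℝ^k be disjoint, set M0 = {P_w : T(P_w) ∈ A} and M1 = {P_w : T(P_w) ∈ B}, and assume M0 and M1 are convex and inf_{P ∈ M0, Q ∈ M1} h(P, Q) ≥ ε for some ε > 0. Then M0 ∩ M1 = ∅ and there exist a constant c > 0 and tests φ_n : Xⁿ → {0,1} with sup_{P ∈ M0} Pⁿ(φ_n = 1) ≤ exp(−c n ε²) and sup_{Q ∈ M1} Qⁿ(φ_n = 0) ≤ exp(−c n ε²) for all n; in particular the hypotheses H0 : f(w) ∈ A versus H1 : f(w) ∈ B admit uniformly consistent tests. -/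
open MeasureTheory Filter

/-- Hellinger distance between measures `P, Q` dominated by `μ`,
computed from their densities (Radon–Nikodym derivatives) with respect
to `μ`: `h(P,Q) = √((1/2) ∫ (√(dP/dμ) − √(dQ/dμ))² dμ)`. -/
noncomputable def hellingerDist' {X : Type*} [MeasurableSpace X]
    (μ P Q : Measure X) : ℝ :=
  Real.sqrt ((1 / 2) * ∫ x,
    (Real.sqrt ((P.rnDeriv μ x).toReal) - Real.sqrt ((Q.rnDeriv μ x).toReal)) ^ 2 ∂μ)



open Pointwise

private lemma aux_sqrt_sq_le_abs {a b : ℝ} (ha : 0 ≤ a) (hb : 0 ≤ b) :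
    (Real.sqrt a - Real.sqrt b) ^ 2 ≤ |a - b| := by
  rcases le_total a b with h | h
  · rw [abs_of_nonpos (by linarith)]
    have h1 : Real.sqrt a ≤ Real.sqrt b := Real.sqrt_le_sqrt h
    have h2 : Real.sqrt a * Real.sqrt a ≤ Real.sqrt a * Real.sqrt b :=
      mul_le_mul_of_nonneg_left h1 (Real.sqrt_nonneg a)
    nlinarith [Real.sq_sqrt ha, Real.sq_sqrt hb, Real.sqrt_nonneg a, Real.sqrt_nonneg b]
  · rw [abs_of_nonneg (by linarith)]
    have h1 : Real.sqrt b ≤ Real.sqrt a := Real.sqrt_le_sqrt h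
    have h2 : Real.sqrt b * Real.sqrt b ≤ Real.sqrt b * Real.sqrt a :=
      mul_le_mul_of_nonneg_left h1 (Real.sqrt_nonneg b)
    nlinarith [Real.sq_sqrt ha, Real.sq_sqrt hb, Real.sqrt_nonneg a, Real.sqrt_nonneg b]

private lemma aux_exp_le_quadratic {y : ℝ} (hy : |y| ≤ 1) :
    Real.exp y ≤ 1 + y + y ^ 2 := by
  have h := Real.exp_bound hy (n := 2) (by norm_num)
  have hs : ∑ m ∈ Finset.range 2, y ^ m / (Nat.factorial m : ℝ) = 1 + y := by
    simp [Finset.sum_range_succ]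
  rw [hs] at h
  rw [sq_abs] at h
  norm_num [Nat.factorial] at h
  have := (abs_le.mp h).2
  nlinarith [sq_nonneg y]

private lemma aux_mgf_single {X : Type*} [MeasurableSpace X] (P : Measure X)
    [IsProbabilityMeasure P] (σ : X → ℝ) (hσm : Measurable σ) (hσb : ∀ x, |σ x| ≤ 1)
    {l : ℝ} (hl0 : 0 < l) (hl1 : l ≤ 1) :
    ∫ x, Real.exp (l * σ x) ∂P ≤ Real.exp (l * (∫ x, σ x ∂P) + l ^ 2) := by
  have hσint : Integrable σ P := by
    refine Integrable.mono' (integrable_const 1) hσm.aestronglyMeasurable ?_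
    exact ae_of_all _ fun x => by simpa using hσb x
  have hexpint : Integrable (fun x => Real.exp (l * σ x)) P := by
    refine Integrable.mono' (integrable_const (Real.exp l)) ?_ ?_
    · exact ((hσm.const_mul l).exp).aestronglyMeasurable
    · refine ae_of_all _ fun x => ?_
      rw [Real.norm_eq_abs, abs_of_pos (Real.exp_pos _)]
      exact Real.exp_le_exp.2 (by nlinarith [(abs_le.mp (hσb x)).2])
  have hpt : ∀ x, Real.exp (l * σ x) ≤ 1 + l * σ x + l ^ 2 := by
    intro x
    have hy : |l * σ x| ≤ 1 := by
      rw [abs_mul, abs_of_pos hl0]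
      calc l * |σ x| ≤ 1 * 1 := by
            apply mul_le_mul hl1 (hσb x) (abs_nonneg _) zero_le_one
        _ = 1 := by ring
    have h := aux_exp_le_quadratic hy
    have hsq : (l * σ x) ^ 2 ≤ l ^ 2 := by
      have : (σ x) ^ 2 ≤ 1 := by nlinarith [abs_le.mp (hσb x), sq_abs (σ x)]
      nlinarith [sq_nonneg l]
    linarith
  have h1int : Integrable (fun x => 1 + l * σ x) P := by
    exact (integrable_const 1).add (hσint.const_mul l)
  have hint2 : Integrable (fun x => 1 + l * σ x + l ^ 2) P := by
    exact h1int.add (integrable_const _)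
  calc ∫ x, Real.exp (l * σ x) ∂P ≤ ∫ x, (1 + l * σ x + l ^ 2) ∂P :=
        integral_mono hexpint hint2 hpt
    _ = 1 + l * (∫ x, σ x ∂P) + l ^ 2 := by
        rw [integral_add h1int (integrable_const _),
          integral_add (integrable_const 1) (hσint.const_mul l), integral_const, integral_const,
          MeasureTheory.integral_const_mul]
        simp
    _ ≤ Real.exp (l * (∫ x, σ x ∂P) + l ^ 2) := by
        have := Real.add_one_le_exp (l * (∫ x, σ x ∂P) + l ^ 2)
        linarith

private lemma aux_chernoff_pi {X : Type*} [MeasurableSpace X] (P : Measure X)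
    [IsProbabilityMeasure P] (σ : X → ℝ) (hσm : Measurable σ) (hσb : ∀ x, |σ x| ≤ 1)
    {l : ℝ} (τ : ℝ) (hl0 : 0 < l) (hl1 : l ≤ 1) (n : ℕ) :
    (Measure.pi (fun _ : Fin n => P) {x | (n : ℝ) * τ ≤ ∑ i, σ (x i)}).toReal
      ≤ Real.exp ((n : ℝ) * (l * ((∫ x, σ x ∂P) - τ) + l ^ 2)) := by
  letI mX : MeasureSpace X := ⟨P⟩
  have hvolX : (volume : Measure X) = P := rfl
  haveI : SigmaFinite (volume : Measure X) := by rw [hvolX]; infer_instance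
  haveI : IsProbabilityMeasure (volume : Measure X) := by rw [hvolX]; infer_instance
  set ν := Measure.pi (fun _ : Fin n => P) with hν
  have hνvol : ν = (volume : Measure (Fin n → X)) := by
    rw [MeasureTheory.volume_pi]
    exact hν
  haveI : IsProbabilityMeasure ν := by
    rw [hν]; infer_instance
  set S : (Fin n → X) → ℝ := fun x => ∑ i, σ (x i) with hS
  have hSmeas : Measurable S := Finset.measurable_sum _ (fun i _ => hσm.comp (measurable_pi_apply i))
  have hSle : ∀ x, S x ≤ n := by
    intro x
    calc S x ≤ ∑ _i : Fin n, (1 : ℝ) :=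
          Finset.sum_le_sum fun i _ => (abs_le.mp (hσb _)).2
      _ = n := by simp
  have hint : Integrable (fun ω => Real.exp (l * S ω)) ν := by
    refine Integrable.mono' (integrable_const (Real.exp (l * n))) ?_ ?_
    · exact ((hSmeas.const_mul l).exp).aestronglyMeasurable
    · refine ae_of_all _ fun x => ?_
      rw [Real.norm_eq_abs, abs_of_pos (Real.exp_pos _)]
      exact Real.exp_le_exp.2 (mul_le_mul_of_nonneg_left (hSle x) hl0.le)
  have key := ProbabilityTheory.measure_ge_le_exp_mul_mgf (X := S) (μ := ν) (t := l)
    ((n : ℝ) * τ) hl0.le hint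
  have hmgf : ProbabilityTheory.mgf S ν l = (∫ x, Real.exp (l * σ x) ∂P) ^ n := by
    rw [ProbabilityTheory.mgf]
    have hfe : ∀ x : Fin n → X, Real.exp (l * S x) = ∏ i : Fin n, Real.exp (l * σ (x i)) := by
      intro x
      rw [← Real.exp_sum, hS]
      congr 1
      rw [Finset.mul_sum]
    rw [integral_congr_ae (ae_of_all _ hfe), hνvol]
    rw [MeasureTheory.integral_fintype_prod_volume_eq_pow (𝕜 := ℝ) (ι := Fin n)
      (fun y => Real.exp (l * σ y))]
    rw [Fintype.card_fin, hvolX]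
  have hsingle := aux_mgf_single P σ hσm hσb hl0 hl1
  have hbase_nonneg : 0 ≤ ∫ x, Real.exp (l * σ x) ∂P :=
    integral_nonneg fun x => (Real.exp_pos _).le
  calc (ν {x | (n : ℝ) * τ ≤ S x}).toReal
      ≤ Real.exp (-l * ((n : ℝ) * τ)) * ProbabilityTheory.mgf S ν l := key
    _ ≤ Real.exp (-l * ((n : ℝ) * τ)) * (Real.exp (l * (∫ x, σ x ∂P) + l ^ 2)) ^ n := by
        rw [hmgf]
        exact mul_le_mul_of_nonneg_left (pow_le_pow_left₀ hbase_nonneg hsingle n)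
          (Real.exp_pos _).le
    _ = Real.exp ((n : ℝ) * (l * ((∫ x, σ x ∂P) - τ) + l ^ 2)) := by
        rw [← Real.exp_nat_mul, ← Real.exp_add]
        congr 1
        ring

section part2
variable {X : Type*} [MeasurableSpace X]

private lemma aux_test_of_sep (M0 M1 : Set (Measure X))
    (h0 : ∀ P ∈ M0, IsProbabilityMeasure P) (h1 : ∀ Q ∈ M1, IsProbabilityMeasure Q)
    (σ : X → ℝ) (hσm : Measurable σ) (hσb : ∀ x, |σ x| ≤ 1)
    (a γ : ℝ) (hγ0 : 0 < γ)
    (hm0 : ∀ P ∈ M0, ∫ x, σ x ∂P ≤ a) (hm1 : ∀ Q ∈ M1, a + γ ≤ ∫ x, σ x ∂Q) :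
    ∃ c > (0:ℝ), ∃ φ : (n : ℕ) → (Fin n → X) → Bool, (∀ n, Measurable (φ n)) ∧ ∀ n : ℕ,
      (⨆ P ∈ M0, Measure.pi (fun _ : Fin n => P) {x | φ n x = true})
          ≤ ENNReal.ofReal (Real.exp (-(c * n))) ∧
      (⨆ Q ∈ M1, Measure.pi (fun _ : Fin n => Q) {x | φ n x = false})
          ≤ ENNReal.ofReal (Real.exp (-(c * n))) := by
  classical
  set l : ℝ := min (γ / 4) (1 / 2) with hl
  have hl0 : 0 < l := lt_min (by linarith) (by norm_num)
  have hl1 : l ≤ 1 := le_trans (min_le_right _ _) (by norm_num)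
  have hlγ : l ≤ γ / 4 := min_le_left _ _
  set c : ℝ := l * γ / 4 with hc
  have hc0 : 0 < c := by positivity
  set τ : ℝ := a + γ / 2 with hτ
  refine ⟨c, hc0, fun n x => if (n : ℝ) * τ ≤ ∑ i, σ (x i) then true else false, ?_, ?_⟩
  · intro n
    have hSmeas : Measurable (fun x : Fin n → X => ∑ i, σ (x i)) :=
      Finset.measurable_sum _ (fun i _ => hσm.comp (measurable_pi_apply i))
    exact Measurable.ite (measurableSet_le measurable_const hSmeas)
      measurable_const measurable_const
  intro n
  have hexp : ∀ m τ' : ℝ, m ≤ τ' - γ / 2 → (n : ℝ) * (l * (m - τ') + l ^ 2) ≤ -(c * n) := by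
    intro m τ' hm
    have h1 : l * (m - τ') + l ^ 2 ≤ -c := by
      have h2 : m - τ' ≤ -(γ/2) := by linarith
      have h3 : l * (m - τ') ≤ l * (-(γ/2)) := mul_le_mul_of_nonneg_left h2 hl0.le
      have h4 : l ^ 2 ≤ l * (γ / 4) := by
        have := mul_le_mul_of_nonneg_left hlγ hl0.le
        nlinarith
      rw [hc]; nlinarith
    calc (n : ℝ) * (l * (m - τ') + l ^ 2) ≤ (n : ℝ) * (-c) :=
          mul_le_mul_of_nonneg_left h1 (Nat.cast_nonneg n)
      _ = -(c * n) := by ring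
  constructor
  · refine iSup₂_le fun P hP => ?_
    haveI := h0 P hP
    have hset : {x : Fin n → X | (if (n : ℝ) * τ ≤ ∑ i, σ (x i) then true else false) = true}
        = {x : Fin n → X | (n : ℝ) * τ ≤ ∑ i, σ (x i)} := by
      ext x; by_cases h : (n : ℝ) * τ ≤ ∑ i, σ (x i) <;> simp [h]
    rw [hset]
    have hb := aux_chernoff_pi P σ hσm hσb τ hl0 hl1 n
    have hbound : (Measure.pi (fun _ : Fin n => P) {x | (n : ℝ) * τ ≤ ∑ i, σ (x i)}).toReal
        ≤ Real.exp (-(c * n)) := by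
      refine hb.trans (le_trans (Real.exp_le_exp.2 ?_) le_rfl)
      exact hexp _ _ (by have := hm0 P hP; rw [hτ]; linarith)
    haveI : IsProbabilityMeasure (Measure.pi (fun _ : Fin n => P)) := by infer_instance
    rw [← ENNReal.ofReal_toReal (measure_ne_top (Measure.pi (fun _ : Fin n => P)) _)]
    exact ENNReal.ofReal_le_ofReal hbound
  · refine iSup₂_le fun Q hQ => ?_
    haveI := h1 Q hQ
    have hset : {x : Fin n → X | (if (n : ℝ) * τ ≤ ∑ i, σ (x i) then true else false) = false}
        ⊆ {x : Fin n → X | (n : ℝ) * (-τ) ≤ ∑ i, (fun y => -σ y) (x i)} := by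
      intro x hx
      have hx' : ¬ ((n : ℝ) * τ ≤ ∑ i, σ (x i)) := by simpa using hx
      push_neg at hx'
      simp only [Set.mem_setOf_eq]
      have hsum : ∑ i : Fin n, (fun y => -σ y) (x i) = -∑ i, σ (x i) := by simp
      rw [hsum]
      nlinarith
    have hb := aux_chernoff_pi Q (fun y => -σ y) hσm.neg
      (fun x => by simpa using hσb x) (-τ) hl0 hl1 n
    have hmean : ∫ x, (fun y => -σ y) x ∂Q ≤ -(a + γ) := by
      have := hm1 Q hQ
      rw [integral_neg]
      linarith
    have hbound : (Measure.pi (fun _ : Fin n => Q)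
        {x | (n : ℝ) * (-τ) ≤ ∑ i, (fun y => -σ y) (x i)}).toReal ≤ Real.exp (-(c * n)) := by
      refine hb.trans (Real.exp_le_exp.2 ?_)
      exact hexp _ _ (by rw [hτ]; linarith)
    haveI : IsProbabilityMeasure (Measure.pi (fun _ : Fin n => Q)) := by infer_instance
    calc Measure.pi (fun _ : Fin n => Q) _ ≤ Measure.pi (fun _ : Fin n => Q)
          {x | (n : ℝ) * (-τ) ≤ ∑ i, (fun y => -σ y) (x i)} := measure_mono hset
      _ ≤ ENNReal.ofReal (Real.exp (-(c * n))) := by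
          rw [← ENNReal.ofReal_toReal (measure_ne_top (Measure.pi (fun _ : Fin n => Q)) _)]
          exact ENNReal.ofReal_le_ofReal hbound

end part2

section part3
variable {X : Type*} [MeasurableSpace X]

private lemma aux_hellinger_l1 {μ ν P Q : Measure X} [SigmaFinite μ] [SigmaFinite ν]
    [IsProbabilityMeasure P] [IsProbabilityMeasure Q]
    (hPμ : P ≪ μ) (hQμ : Q ≪ μ) (hPν : P ≪ ν) (hQν : Q ≪ ν)
    {ε : ℝ} (hε : 0 ≤ ε) (h : ε ≤ hellingerDist' μ P Q) :
    2 * ε ^ 2 ≤ ∫ x, |(P.rnDeriv ν x).toReal - (Q.rnDeriv ν x).toReal| ∂ν := by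
  set p : X → ℝ := fun x => (P.rnDeriv μ x).toReal with hp
  set q : X → ℝ := fun x => (Q.rnDeriv μ x).toReal with hq
  set p' : X → ℝ := fun x => (P.rnDeriv ν x).toReal with hp'
  set q' : X → ℝ := fun x => (Q.rnDeriv ν x).toReal with hq'
  have hpm : Measurable p := (Measure.measurable_rnDeriv P μ).ennreal_toReal
  have hqm : Measurable q := (Measure.measurable_rnDeriv Q μ).ennreal_toReal
  have hp'm : Measurable p' := (Measure.measurable_rnDeriv P ν).ennreal_toReal
  have hq'm : Measurable q' := (Measure.measurable_rnDeriv Q ν).ennreal_toReal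
  have hip : Integrable p μ := Measure.integrable_toReal_rnDeriv
  have hiq : Integrable q μ := Measure.integrable_toReal_rnDeriv
  have hip' : Integrable p' ν := Measure.integrable_toReal_rnDeriv
  have hiq' : Integrable q' ν := Measure.integrable_toReal_rnDeriv
  -- step 1 : 2 ε^2 ≤ ∫ (√p - √q)^2 dμ
  set I : ℝ := ∫ x, (Real.sqrt (p x) - Real.sqrt (q x)) ^ 2 ∂μ with hI
  have hInn : 0 ≤ I := integral_nonneg fun x => sq_nonneg _
  have hε2 : 2 * ε ^ 2 ≤ I := by
    have h1 : ε ^ 2 ≤ (Real.sqrt ((1 / 2) * I)) ^ 2 := by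
      apply pow_le_pow_left₀ hε
      exact h
    rw [Real.sq_sqrt (by positivity)] at h1
    linarith
  -- step 2 : I ≤ ∫ |p - q| dμ
  have hiqp : Integrable (fun x => |p x - q x|) μ := (hip.sub hiq).abs
  have hIle : I ≤ ∫ x, |p x - q x| ∂μ := by
    refine integral_mono ?_ hiqp (fun x => aux_sqrt_sq_le_abs ENNReal.toReal_nonneg
      ENNReal.toReal_nonneg)
    refine Integrable.mono' hiqp ?_ (ae_of_all _ fun x => ?_)
    · exact (((hpm.sqrt).sub (hqm.sqrt)).pow_const 2).aestronglyMeasurable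
    · rw [Real.norm_eq_abs, abs_of_nonneg (sq_nonneg _)]
      exact aux_sqrt_sq_le_abs ENNReal.toReal_nonneg ENNReal.toReal_nonneg
  -- step 3 : ∫ |p - q| dμ ≤ ∫ |p' - q'| dν via TV
  set s : Set X := {x | p x ≤ q x} with hs
  have hsm : MeasurableSet s := measurableSet_le hpm hqm
  have hiq'p' : Integrable (fun x => |p' x - q' x|) ν := (hip'.sub hiq').abs
  have htv : ∫ x, |p x - q x| ∂μ ≤ ∫ x, |p' x - q' x| ∂ν := by
    have hsplit : ∫ x, |p x - q x| ∂μ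
        = ∫ x in s, |p x - q x| ∂μ + ∫ x in sᶜ, |p x - q x| ∂μ :=
      (integral_add_compl hsm hiqp).symm
    have h1 : ∫ x in s, |p x - q x| ∂μ = (Q s).toReal - (P s).toReal := by
      have : ∫ x in s, |p x - q x| ∂μ = ∫ x in s, (q x - p x) ∂μ := by
        refine setIntegral_congr_fun hsm fun x hx => ?_
        rw [abs_of_nonpos (by simpa [hs, sub_nonpos] using hx)]
        ring
      rw [this, integral_sub hiq.integrableOn hip.integrableOn,
        Measure.setIntegral_toReal_rnDeriv hQμ s, Measure.setIntegral_toReal_rnDeriv hPμ s]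
      rfl
    have h2 : ∫ x in sᶜ, |p x - q x| ∂μ = (P sᶜ).toReal - (Q sᶜ).toReal := by
      have : ∫ x in sᶜ, |p x - q x| ∂μ = ∫ x in sᶜ, (p x - q x) ∂μ := by
        refine setIntegral_congr_fun hsm.compl fun x hx => ?_
        have hx' : q x ≤ p x := le_of_lt (by simpa [hs, not_le] using hx)
        rw [abs_of_nonneg (by linarith)]
      rw [this, integral_sub hip.integrableOn hiq.integrableOn,
        Measure.setIntegral_toReal_rnDeriv hPμ sᶜ, Measure.setIntegral_toReal_rnDeriv hQμ sᶜ]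
      rfl
    have h3 : (Q s).toReal - (P s).toReal ≤ ∫ x in s, |p' x - q' x| ∂ν := by
      show Q.real s - P.real s ≤ _
      rw [← Measure.setIntegral_toReal_rnDeriv hQν s, ← Measure.setIntegral_toReal_rnDeriv hPν s,
        ← integral_sub hiq'.integrableOn hip'.integrableOn]
      refine setIntegral_mono_on (hiq'.integrableOn.sub hip'.integrableOn)
        hiq'p'.integrableOn hsm fun x _ => ?_
      rw [abs_sub_comm]
      exact le_abs_self _
    have h4 : (P sᶜ).toReal - (Q sᶜ).toReal ≤ ∫ x in sᶜ, |p' x - q' x| ∂ν := by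
      show P.real sᶜ - Q.real sᶜ ≤ _
      rw [← Measure.setIntegral_toReal_rnDeriv hPν sᶜ, ← Measure.setIntegral_toReal_rnDeriv hQν sᶜ,
        ← integral_sub hip'.integrableOn hiq'.integrableOn]
      refine setIntegral_mono_on (hip'.integrableOn.sub hiq'.integrableOn)
        hiq'p'.integrableOn hsm.compl fun x _ => ?_
      exact le_abs_self _
    have h5 : ∫ x in s, |p' x - q' x| ∂ν + ∫ x in sᶜ, |p' x - q' x| ∂ν
        = ∫ x, |p' x - q' x| ∂ν := integral_add_compl hsm hiq'p'
    rw [hsplit, h1, h2, ← h5]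
    linarith
  -- conclude
  have hhd : hellingerDist' μ P Q = Real.sqrt ((1/2) * I) := rfl
  linarith
end part3

section part4
variable {X : Type*} [MeasurableSpace X]

private lemma aux_image_convex (ν : Measure X) [IsFiniteMeasure ν]
    (M : Set (Measure X)) (hprob : ∀ P ∈ M, IsProbabilityMeasure P)
    (hdom : ∀ P ∈ M, P ≪ ν)
    (hconv : ∀ P ∈ M, ∀ Q ∈ M, ∀ t : ℝ, 0 ≤ t → t ≤ 1 →
      (ENNReal.ofReal t • P + ENNReal.ofReal (1 - t) • Q) ∈ M) :
    Convex ℝ {h : Lp ℝ 1 ν |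
      ∃ P ∈ M, ⇑h =ᵐ[ν] fun x => (P.rnDeriv ν x).toReal} := by
  rintro h ⟨P, hP, hPae⟩ h' ⟨P', hP', hP'ae⟩ a b ha hb hab
  haveI := hprob P hP
  haveI := hprob P' hP'
  have hb' : b = 1 - a := by linarith
  set R : Measure X := ENNReal.ofReal a • P + ENNReal.ofReal (1 - a) • P' with hR
  have hRmem : R ∈ M := hconv P hP P' hP' a ha (by linarith)
  refine ⟨R, hRmem, ?_⟩
  -- R as withDensity
  have h1 : ν.withDensity (ENNReal.ofReal a • P.rnDeriv ν) = ENNReal.ofReal a • P := by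
    rw [withDensity_smul _ (Measure.measurable_rnDeriv P ν),
      Measure.withDensity_rnDeriv_eq P ν (hdom P hP)]
  have h2 : ν.withDensity (ENNReal.ofReal (1 - a) • P'.rnDeriv ν)
      = ENNReal.ofReal (1 - a) • P' := by
    rw [withDensity_smul _ (Measure.measurable_rnDeriv P' ν),
      Measure.withDensity_rnDeriv_eq P' ν (hdom P' hP')]
  have hRw : R = ν.withDensity
      (ENNReal.ofReal a • P.rnDeriv ν + ENNReal.ofReal (1 - a) • P'.rnDeriv ν) := by
    rw [withDensity_add_left ((Measure.measurable_rnDeriv P ν).const_smul _), h1, h2]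
  have hRd : R.rnDeriv ν =ᵐ[ν]
      (ENNReal.ofReal a • P.rnDeriv ν + ENNReal.ofReal (1 - a) • P'.rnDeriv ν) := by
    rw [hRw]
    exact Measure.rnDeriv_withDensity ν
      (((Measure.measurable_rnDeriv P ν).const_smul _).add
        ((Measure.measurable_rnDeriv P' ν).const_smul _))
  have hcoe : ⇑(a • h + b • h') =ᵐ[ν] fun x => (R.rnDeriv ν x).toReal := by
    filter_upwards [Lp.coeFn_add (a • h) (b • h'), Lp.coeFn_smul a h, Lp.coeFn_smul b h',
      hPae, hP'ae, hRd, Measure.rnDeriv_lt_top P ν, Measure.rnDeriv_lt_top P' ν]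
      with x e1 e2 e3 e4 e5 e6 t1 t2
    rw [e1]
    simp only [Pi.add_apply]
    rw [e2, e3]
    simp only [Pi.smul_apply, smul_eq_mul]
    rw [e4, e5, e6]
    simp only [Pi.add_apply, Pi.smul_apply, smul_eq_mul]
    rw [ENNReal.toReal_add (ENNReal.mul_ne_top ENNReal.ofReal_ne_top t1.ne)
      (ENNReal.mul_ne_top ENNReal.ofReal_ne_top t2.ne), ENNReal.toReal_mul,
      ENNReal.toReal_mul, ENNReal.toReal_ofReal ha, ENNReal.toReal_ofReal (by linarith)]
    rw [hb']
  exact hcoe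

end part4

section part5
variable {X : Type*} [MeasurableSpace X]

set_option maxHeartbeats 1000000 in
private lemma aux_l1_dual (ν : Measure X) [IsFiniteMeasure ν] (f : Lp ℝ 1 ν →L[ℝ] ℝ) :
    ∃ σ : X → ℝ, Measurable σ ∧ (∀ x, |σ x| ≤ ‖f‖) ∧
      ∀ h : Lp ℝ 1 ν, f h = ∫ x, σ x * ⇑h x ∂ν := by
  classical
  set K : ℝ := ‖f‖ with hK
  have hK0 : 0 ≤ K := norm_nonneg f
  -- inclusion J : L2 → L1
  have hmem21 : ∀ h : Lp ℝ 2 ν, MemLp (⇑h) 1 ν := fun h =>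
    (Lp.memLp h).mono_exponent (by norm_num)
  set Creal : ℝ := ((ν Set.univ) ^ ((1:ℝ)/2)).toReal with hCreal
  have hJL : ∃ JL : Lp ℝ 2 ν →ₗ[ℝ] Lp ℝ 1 ν, ∀ h, JL h = (hmem21 h).toLp ⇑h := by
    refine ⟨⟨⟨fun h => (hmem21 h).toLp ⇑h, ?_⟩, ?_⟩, fun h => rfl⟩
    · intro h h'
      apply Lp.ext
      filter_upwards [MemLp.coeFn_toLp (hmem21 (h + h')), MemLp.coeFn_toLp (hmem21 h),
        MemLp.coeFn_toLp (hmem21 h'), Lp.coeFn_add h h',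
        Lp.coeFn_add ((hmem21 h).toLp ⇑h) ((hmem21 h').toLp ⇑h')] with x e1 e2 e3 e4 e5
      rw [e1, e5, e4]
      simp only [Pi.add_apply]
      rw [e2, e3]
    · intro c h
      apply Lp.ext
      filter_upwards [MemLp.coeFn_toLp (hmem21 (c • h)), MemLp.coeFn_toLp (hmem21 h),
        Lp.coeFn_smul c h, Lp.coeFn_smul c ((hmem21 h).toLp ⇑h)] with x e1 e2 e3 e4
      rw [e1, RingHom.id_apply, e4]
      simp only [Pi.smul_apply, smul_eq_mul]
      rw [e2, e3]
      simp
  obtain ⟨JL, hJLdef⟩ := hJL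
  have hJbound : ∀ h : Lp ℝ 2 ν, ‖JL h‖ ≤ Creal * ‖h‖ := by
    intro h
    have h1 : ‖JL h‖ = (eLpNorm (⇑h) 1 ν).toReal := by rw [hJLdef, Lp.norm_toLp]
    have h2 : eLpNorm (⇑h) 1 ν ≤ eLpNorm (⇑h) 2 ν * (ν Set.univ) ^ ((1:ℝ)/2) := by
      have := eLpNorm_le_eLpNorm_mul_rpow_measure_univ (μ := ν) (f := ⇑h)
        (p := 1) (q := 2) (by norm_num) (Lp.aestronglyMeasurable h)
      convert this using 2
      norm_num
    have hne : eLpNorm (⇑h) 2 ν * (ν Set.univ) ^ ((1:ℝ)/2) ≠ ⊤ :=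
      ENNReal.mul_ne_top (Lp.eLpNorm_lt_top h).ne
        (ENNReal.rpow_ne_top_of_nonneg (by norm_num) (measure_ne_top ν _))
    calc ‖JL h‖ = (eLpNorm (⇑h) 1 ν).toReal := h1
      _ ≤ (eLpNorm (⇑h) 2 ν * (ν Set.univ) ^ ((1:ℝ)/2)).toReal := ENNReal.toReal_mono hne h2
      _ = Creal * ‖h‖ := by
          rw [ENNReal.toReal_mul, Lp.norm_def]
          ring
  set J : Lp ℝ 2 ν →L[ℝ] Lp ℝ 1 ν := JL.mkContinuous Creal hJbound with hJdef
  have hJapp : ∀ (h : Lp ℝ 2 ν), ⇑(J h) =ᵐ[ν] ⇑h := by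
    intro h
    have : J h = (hmem21 h).toLp ⇑h := hJLdef h
    rw [this]
    exact MemLp.coeFn_toLp _
  -- Riesz representation on L2
  set g : Lp ℝ 2 ν := (InnerProductSpace.toDual ℝ (Lp ℝ 2 ν)).symm (f.comp J) with hg
  have hgrep : ∀ h : Lp ℝ 2 ν, ∫ x, (⇑g x) * (⇑h x) ∂ν = f (J h) := by
    intro h
    have h1 : inner ℝ g h = (f.comp J) h := InnerProductSpace.toDual_symm_apply
    rw [MeasureTheory.L2.inner_def] at h1
    simp only [RCLike.inner_apply, starRingEnd_apply, star_trivial] at h1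
    exact (integral_congr_ae (ae_of_all _ fun x => mul_comm _ _)).trans h1
  set σ₀ : X → ℝ := ⇑g with hσ₀
  have hσ₀m : Measurable σ₀ := (Lp.stronglyMeasurable g).measurable
  have hσ₀int : Integrable σ₀ ν :=
    memLp_one_iff_integrable.mp ((Lp.memLp g).mono_exponent (by norm_num))
  -- key set estimate
  have hsetest : ∀ S : Set X, MeasurableSet S → |∫ x in S, σ₀ x ∂ν| ≤ K * (ν S).toReal := by
    intro S hS
    have hind : MemLp (S.indicator (fun _ => (1:ℝ))) 2 ν :=
      memLp_indicator_const 2 hS 1 (Or.inr (measure_ne_top ν S))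
    set h2 : Lp ℝ 2 ν := hind.toLp _ with hh2
    have hh2ae : ⇑h2 =ᵐ[ν] S.indicator (fun _ => (1:ℝ)) := MemLp.coeFn_toLp _
    have hJval : f (J h2) = ∫ x in S, σ₀ x ∂ν := by
      rw [← hgrep h2]
      rw [← integral_indicator hS]
      refine integral_congr_ae ?_
      filter_upwards [hh2ae] with x e1
      rw [e1]
      by_cases hx : x ∈ S <;> simp [hx]
    have hnorm : ‖J h2‖ = (ν S).toReal := by
      rw [MeasureTheory.L1.norm_eq_integral_norm]
      have : ∫ a, ‖⇑(J h2) a‖ ∂ν = ∫ a, S.indicator (fun _ => (1:ℝ)) a ∂ν := by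
        refine integral_congr_ae ?_
        filter_upwards [hJapp h2, hh2ae] with x e1 e2
        rw [e1, e2]
        by_cases hx : x ∈ S <;> simp [hx]
      rw [this, integral_indicator_const _ hS]
      simp
      rfl
    calc |∫ x in S, σ₀ x ∂ν| = ‖f (J h2)‖ := by rw [hJval, Real.norm_eq_abs]
      _ ≤ K * ‖J h2‖ := ContinuousLinearMap.le_opNorm f (J h2)
      _ = K * (ν S).toReal := by rw [hnorm]
  -- a.e. bound on σ₀
  have hae : ∀ᵐ x ∂ν, |σ₀ x| ≤ K := by
    set A : ℕ → Set X := fun m => {x | K + 1/(m+1) ≤ σ₀ x} with hA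
    set B : ℕ → Set X := fun m => {x | σ₀ x ≤ -(K + 1/(m+1))} with hB
    have hAm : ∀ m, MeasurableSet (A m) := fun m => measurableSet_le measurable_const hσ₀m
    have hBm : ∀ m, MeasurableSet (B m) := fun m => measurableSet_le hσ₀m measurable_const
    have hAnull : ∀ m, ν (A m) = 0 := by
      intro m
      have hd : (0:ℝ) < 1/(m+1) := by positivity
      have h1 : (K + 1/(m+1)) * (ν (A m)).toReal ≤ ∫ x in A m, σ₀ x ∂ν := by
        have := setIntegral_mono_on (integrableOn_const (measure_ne_top ν _))
          hσ₀int.integrableOn (hAm m) (fun x hx => hx)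
        calc (K + 1/(m+1)) * (ν (A m)).toReal
            = ∫ _x in A m, (K + 1/(m+1)) ∂ν := by rw [setIntegral_const, smul_eq_mul, measureReal_def]; ring
          _ ≤ ∫ x in A m, σ₀ x ∂ν := this
      have h2 : ∫ x in A m, σ₀ x ∂ν ≤ K * (ν (A m)).toReal :=
        (le_abs_self _).trans (hsetest _ (hAm m))
      have h3 : (ν (A m)).toReal ≤ 0 := by nlinarith [ENNReal.toReal_nonneg (a := ν (A m))]
      have h4 : (ν (A m)).toReal = 0 :=
        le_antisymm h3 ENNReal.toReal_nonneg
      exact (ENNReal.toReal_eq_zero_iff _).mp h4 |>.resolve_right (measure_ne_top ν _)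
    have hBnull : ∀ m, ν (B m) = 0 := by
      intro m
      have hd : (0:ℝ) < 1/(m+1) := by positivity
      have h1 : ∫ x in B m, σ₀ x ∂ν ≤ (-(K + 1/(m+1))) * (ν (B m)).toReal := by
        have := setIntegral_mono_on hσ₀int.integrableOn
          (integrableOn_const (measure_ne_top ν _)) (hBm m) (fun x hx => hx)
        calc ∫ x in B m, σ₀ x ∂ν ≤ ∫ _x in B m, (-(K + 1/(m+1))) ∂ν := this
          _ = (-(K + 1/(m+1))) * (ν (B m)).toReal := by rw [setIntegral_const, smul_eq_mul, measureReal_def]; ring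
      have h2 : -(K * (ν (B m)).toReal) ≤ ∫ x in B m, σ₀ x ∂ν := by
        have := (abs_le.mp (hsetest _ (hBm m))).1
        linarith
      have h3 : (ν (B m)).toReal ≤ 0 := by nlinarith [ENNReal.toReal_nonneg (a := ν (B m))]
      have h4 : (ν (B m)).toReal = 0 := le_antisymm h3 ENNReal.toReal_nonneg
      exact (ENNReal.toReal_eq_zero_iff _).mp h4 |>.resolve_right (measure_ne_top ν _)
    rw [ae_iff]
    have hU : ν (⋃ m : ℕ, A m ∪ B m) = 0 :=
      measure_iUnion_null fun m => measure_union_null (hAnull m) (hBnull m)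
    refine measure_mono_null ?_ hU
    intro x hx
    simp only [Set.mem_setOf_eq, not_le] at hx
    obtain ⟨m, hm⟩ := exists_nat_one_div_lt (by linarith : (0:ℝ) < |σ₀ x| - K)
    refine Set.mem_iUnion.mpr ⟨m, ?_⟩
    rcases le_total 0 (σ₀ x) with hs | hs
    · left
      have : |σ₀ x| = σ₀ x := abs_of_nonneg hs
      simp only [hA, Set.mem_setOf_eq]
      linarith
    · right
      have : |σ₀ x| = -σ₀ x := abs_of_nonpos hs
      simp only [hB, Set.mem_setOf_eq]
      linarith
  -- clipped version
  set σ : X → ℝ := fun x => max (-K) (min K (σ₀ x)) with hσdef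
  have hσm : Measurable σ := measurable_const.max (measurable_const.min hσ₀m)
  have hσb : ∀ x, |σ x| ≤ K := by
    intro x
    rw [abs_le]
    constructor
    · exact le_max_left _ _
    · exact max_le (by linarith) (min_le_left _ _)
  have hσae : σ =ᵐ[ν] σ₀ := by
    filter_upwards [hae] with x hx
    obtain ⟨h1, h2⟩ := abs_le.mp hx
    rw [hσdef]
    simp only
    rw [min_eq_right h2, max_eq_right h1]
  refine ⟨σ, hσm, fun x => (hσb x).trans le_rfl, ?_⟩
  -- f h = ∫ σ * h for all h ∈ L1, via density of simple functions
  have hg1int : ∀ h : Lp ℝ 1 ν, Integrable (fun x => σ x * ⇑h x) ν := fun h =>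
    Integrable.bdd_mul (c := K) (L1.integrable_coeFn h) hσm.aestronglyMeasurable
      (ae_of_all _ fun x => by rw [Real.norm_eq_abs]; exact hσb x)
  set g1 : Lp ℝ 1 ν → ℝ := fun h => ∫ x, σ x * ⇑h x ∂ν with hg1
  have hg1lip : LipschitzWith (Real.toNNReal K) g1 := by
    refine LipschitzWith.of_dist_le_mul fun h h' => ?_
    rw [Real.dist_eq, dist_eq_norm]
    have hsub : g1 h - g1 h' = ∫ x, σ x * (⇑h x - ⇑h' x) ∂ν := by
      rw [hg1]
      simp only
      rw [← integral_sub (hg1int h) (hg1int h')]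
      exact integral_congr_ae (ae_of_all _ fun x => (mul_sub _ _ _).symm)
    have habs : |∫ x, σ x * (⇑h x - ⇑h' x) ∂ν| ≤ K * ∫ x, |⇑h x - ⇑h' x| ∂ν := by
      have hint1 : Integrable (fun x => σ x * (⇑h x - ⇑h' x)) ν :=
        Integrable.bdd_mul ((L1.integrable_coeFn h).sub (L1.integrable_coeFn h'))
          hσm.aestronglyMeasurable (c := K) (ae_of_all _ fun x => by rw [Real.norm_eq_abs]; exact hσb x)
      have hint1' : Integrable (fun x => |σ x| * |⇑h x - ⇑h' x|) ν := by
        simpa [abs_mul] using hint1.abs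
      calc |∫ x, σ x * (⇑h x - ⇑h' x) ∂ν| ≤ ∫ x, |σ x| * |⇑h x - ⇑h' x| ∂ν := by
            have := norm_integral_le_integral_norm (fun x => σ x * (⇑h x - ⇑h' x)) (μ := ν)
            simpa [Real.norm_eq_abs, abs_mul] using this
        _ ≤ ∫ x, K * |⇑h x - ⇑h' x| ∂ν := by
            refine integral_mono hint1'
              ((((L1.integrable_coeFn h).sub (L1.integrable_coeFn h')).abs).const_mul K)
              (fun x => ?_)
            exact mul_le_mul_of_nonneg_right (hσb x) (abs_nonneg _)
        _ = K * ∫ x, |⇑h x - ⇑h' x| ∂ν := by rw [MeasureTheory.integral_const_mul]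
    have hnorm : ‖h - h'‖ = ∫ x, |⇑h x - ⇑h' x| ∂ν := by
      rw [MeasureTheory.L1.norm_eq_integral_norm]
      refine integral_congr_ae ?_
      filter_upwards [Lp.coeFn_sub h h'] with x hx
      rw [hx]
      simp [Real.norm_eq_abs]
    rw [Real.coe_toNNReal _ hK0]
    calc |g1 h - g1 h'| = |∫ x, σ x * (⇑h x - ⇑h' x) ∂ν| := by rw [hsub]
      _ ≤ K * ∫ x, |⇑h x - ⇑h' x| ∂ν := habs
      _ = K * ‖h - h'‖ := by rw [hnorm]
  have hEqOn : Set.EqOn (⇑f) g1 (Set.range ((↑) : Lp.simpleFunc ℝ 1 ν → Lp ℝ 1 ν)) := by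
    rintro _ ⟨sf, rfl⟩
    have hs_ae : ⇑(↑sf : Lp ℝ 1 ν) =ᵐ[ν] ⇑(Lp.simpleFunc.toSimpleFunc sf) :=
      (Lp.simpleFunc.toSimpleFunc_eq_toFun sf).symm
    have hmem2 : MemLp (⇑(Lp.simpleFunc.toSimpleFunc sf)) 2 ν :=
      ((Lp.simpleFunc.toSimpleFunc sf).memLp_top ν).mono_exponent le_top
    set h2 : Lp ℝ 2 ν := hmem2.toLp _ with hh2
    have hh2ae : ⇑h2 =ᵐ[ν] ⇑(Lp.simpleFunc.toSimpleFunc sf) := MemLp.coeFn_toLp _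
    have hJh2 : J h2 = (↑sf : Lp ℝ 1 ν) := by
      apply Lp.ext
      filter_upwards [hJapp h2, hh2ae, hs_ae] with x e1 e2 e3
      rw [e1, e2, e3]
    calc f ↑sf = f (J h2) := by rw [hJh2]
      _ = ∫ x, σ₀ x * ⇑h2 x ∂ν := (hgrep h2).symm
      _ = g1 ↑sf := by
          refine integral_congr_ae ?_
          filter_upwards [hh2ae, hs_ae, hσae] with x e1 e2 e3
          rw [e1, ← e2, e3]
  have hfg1 : ⇑f = g1 :=
    Continuous.ext_on (Lp.simpleFunc.denseRange (by norm_num : (1:ENNReal) ≠ ⊤))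
      f.continuous hg1lip.continuous hEqOn
  intro h
  exact congrFun hfg1 h
end part5

section part6
variable {X : Type*} [MeasurableSpace X]

set_option maxHeartbeats 1000000 in
private lemma aux_exists_sep_fun (μ : Measure X) [SigmaFinite μ]
    (M0 M1 : Set (Measure X))
    (h0p : ∀ P ∈ M0, IsProbabilityMeasure P) (h0d : ∀ P ∈ M0, P ≪ μ)
    (h1p : ∀ Q ∈ M1, IsProbabilityMeasure Q) (h1d : ∀ Q ∈ M1, Q ≪ μ)
    (hconv0 : ∀ P ∈ M0, ∀ Q ∈ M0, ∀ t : ℝ, 0 ≤ t → t ≤ 1 →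
      (ENNReal.ofReal t • P + ENNReal.ofReal (1 - t) • Q) ∈ M0)
    (hconv1 : ∀ P ∈ M1, ∀ Q ∈ M1, ∀ t : ℝ, 0 ≤ t → t ≤ 1 →
      (ENNReal.ofReal t • P + ENNReal.ofReal (1 - t) • Q) ∈ M1)
    (hne0 : M0.Nonempty) (hne1 : M1.Nonempty)
    {ε : ℝ} (hε : 0 < ε)
    (hsep : ∀ P ∈ M0, ∀ Q ∈ M1, ε ≤ hellingerDist' μ P Q) :
    ∃ σ : X → ℝ, Measurable σ ∧ (∀ x, |σ x| ≤ 1) ∧ ∃ a : ℝ,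
      (∀ P ∈ M0, ∫ x, σ x ∂P ≤ a) ∧ (∀ Q ∈ M1, a + ε ^ 2 / 2 ≤ ∫ x, σ x ∂Q) := by
  classical
  obtain ⟨ν, hνfin, hμν, hνμ⟩ := exists_isFiniteMeasure_absolutelyContinuous μ
  haveI := hνfin
  have h0ν : ∀ P ∈ M0, P ≪ ν := fun P hP => (h0d P hP).trans hμν
  have h1ν : ∀ Q ∈ M1, Q ≪ ν := fun Q hQ => (h1d Q hQ).trans hμν
  -- L¹ density elements
  have hmemdens : ∀ P : Measure X, IsProbabilityMeasure P →
      MemLp (fun x => (P.rnDeriv ν x).toReal) 1 ν := fun P hP =>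
    memLp_one_iff_integrable.mpr (by haveI := hP; exact Measure.integrable_toReal_rnDeriv)
  set C0 : Set (Lp ℝ 1 ν) :=
    {h | ∃ P ∈ M0, ⇑h =ᵐ[ν] fun x => (P.rnDeriv ν x).toReal} with hC0
  set C1 : Set (Lp ℝ 1 ν) :=
    {h | ∃ Q ∈ M1, ⇑h =ᵐ[ν] fun x => (Q.rnDeriv ν x).toReal} with hC1
  have hC0conv : Convex ℝ C0 := aux_image_convex ν M0 h0p h0ν hconv0
  have hC1conv : Convex ℝ C1 := aux_image_convex ν M1 h1p h1ν hconv1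
  set l1 : ∀ P : Measure X, IsProbabilityMeasure P → Lp ℝ 1 ν :=
    fun P hP => (hmemdens P hP).toLp _ with hl1
  have hl1mem0 : ∀ P (hP : P ∈ M0), l1 P (h0p P hP) ∈ C0 := fun P hP =>
    ⟨P, hP, MemLp.coeFn_toLp _⟩
  have hl1mem1 : ∀ Q (hQ : Q ∈ M1), l1 Q (h1p Q hQ) ∈ C1 := fun Q hQ =>
    ⟨Q, hQ, MemLp.coeFn_toLp _⟩
  -- distance between the convex sets
  have hdist : ∀ h₀ ∈ C0, ∀ h₁ ∈ C1, 2 * ε ^ 2 ≤ ‖h₀ - h₁‖ := by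
    rintro h₀ ⟨P, hP, hPae⟩ h₁ ⟨Q, hQ, hQae⟩
    haveI := h0p P hP
    haveI := h1p Q hQ
    have hnorm : ‖h₀ - h₁‖
        = ∫ x, |(P.rnDeriv ν x).toReal - (Q.rnDeriv ν x).toReal| ∂ν := by
      rw [MeasureTheory.L1.norm_eq_integral_norm]
      refine integral_congr_ae ?_
      filter_upwards [Lp.coeFn_sub h₀ h₁, hPae, hQae] with x e1 e2 e3
      rw [e1]
      simp only [Pi.sub_apply]
      rw [e2, e3, Real.norm_eq_abs]
    rw [hnorm]
    exact aux_hellinger_l1 (h0d P hP) (h1d Q hQ) (h0ν P hP) (h1ν Q hQ) hε.le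
      (hsep P hP Q hQ)
  -- Hahn-Banach separation
  have hr : (0:ℝ) < ε ^ 2 := by positivity
  set sOpen : Set (Lp ℝ 1 ν) := C0 + Metric.ball (0 : Lp ℝ 1 ν) (ε ^ 2) with hsOpen
  have hso : IsOpen sOpen := IsOpen.add_left Metric.isOpen_ball
  have hsc : Convex ℝ sOpen := hC0conv.add (convex_ball (0 : Lp ℝ 1 ν) (ε ^ 2))
  have hdisj : Disjoint sOpen C1 := by
    rw [Set.disjoint_left]
    rintro z ⟨u, hu, v, hv, rfl⟩ hz
    have h1 := hdist u hu (u + v) hz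
    have h2 : ‖u - (u + v)‖ = ‖v‖ := by
      rw [show u - (u + v) = -v by abel, norm_neg]
    rw [h2] at h1
    rw [mem_ball_zero_iff] at hv
    linarith
  obtain ⟨f, u, hfu, hfC1⟩ := geometric_hahn_banach_open hsc hso hC1conv hdisj
  have hC0sub : ∀ z ∈ C0, z ∈ sOpen := by
    intro z hz
    have := Set.add_mem_add hz (Metric.mem_ball_self (x := (0 : Lp ℝ 1 ν)) hr)
    rwa [add_zero] at this
  obtain ⟨P₀, hP₀⟩ := hne0
  obtain ⟨Q₀, hQ₀⟩ := hne1
  have hK0 : 0 < ‖f‖ := by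
    rcases (norm_nonneg f).lt_or_eq with h | h
    · exact h
    · exfalso
      have hf0 : f = 0 := (ContinuousLinearMap.opNorm_zero_iff f).mp h.symm
      have h1 := hfu _ (hC0sub _ (hl1mem0 P₀ hP₀))
      have h2 := hfC1 _ (hl1mem1 Q₀ hQ₀)
      rw [hf0] at h1 h2
      simp only [ContinuousLinearMap.zero_apply] at h1 h2
      linarith
  -- gap : f z ≤ u - (ε²/2)‖f‖ on C0
  have hgap : ∀ z ∈ C0, f z ≤ u - ε ^ 2 / 2 * ‖f‖ := by
    intro z hz
    have hball : ∀ w : Lp ℝ 1 ν, ‖w‖ < ε ^ 2 → f w ≤ u - f z := by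
      intro w hw
      have hwmem : w ∈ Metric.ball (0 : Lp ℝ 1 ν) (ε ^ 2) := by
        simpa [mem_ball_zero_iff] using hw
      have := hfu _ (Set.add_mem_add hz hwmem)
      rw [map_add] at this
      linarith
    have hfz0 : (0:ℝ) ≤ u - f z := by
      have := hball 0 (by simpa using hr)
      simpa using this
    have hop : ‖f‖ ≤ (u - f z) / (ε ^ 2 / 2) := by
      refine ContinuousLinearMap.opNorm_le_bound f (div_nonneg hfz0 (by positivity))
        fun w => ?_
      by_cases hw0 : w = 0
      · simp [hw0]
      · have hwn : 0 < ‖w‖ := norm_pos_iff.mpr hw0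
        set w' : Lp ℝ 1 ν := ((ε ^ 2 / 2) / ‖w‖) • w with hw'
        have hnw : ‖w'‖ = ε ^ 2 / 2 := by
          rw [hw', norm_smul, Real.norm_eq_abs, abs_of_pos (by positivity)]
          field_simp
        have h1 : f w' ≤ u - f z := hball w' (by rw [hnw]; linarith)
        have h2 : f (-w') ≤ u - f z := hball _ (by rw [norm_neg, hnw]; linarith)
        have h2' : -(u - f z) ≤ f w' := by
          rw [map_neg] at h2
          linarith
        have h3 : |f w'| ≤ u - f z := abs_le.mpr ⟨h2', h1⟩
        have h4 : f w' = ((ε ^ 2 / 2) / ‖w‖) * f w := by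
          rw [hw', _root_.map_smul, smul_eq_mul]
        rw [h4, abs_mul, abs_of_pos (by positivity)] at h3
        have h5 : (ε ^ 2 / 2) * |f w| / ‖w‖ ≤ u - f z := by
          rw [div_mul_eq_mul_div] at h3
          exact h3
        rw [div_le_iff₀ hwn] at h5
        rw [Real.norm_eq_abs, div_mul_eq_mul_div, le_div_iff₀ (by positivity : (0:ℝ) < ε ^ 2 / 2)]
        linarith
    rw [le_div_iff₀ (by positivity : (0:ℝ) < ε ^ 2 / 2)] at hop
    linarith
  -- duality
  obtain ⟨σ', hσ'm, hσ'b, hσ'rep⟩ := aux_l1_dual ν f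
  set K : ℝ := ‖f‖ with hKdef
  -- mean formula
  have hmean : ∀ P : Measure X, ∀ hP : IsProbabilityMeasure P, P ≪ ν →
      ∫ x, σ' x ∂P = f (l1 P hP) := by
    intro P hP hPν
    haveI := hP
    rw [hσ'rep (l1 P hP)]
    have h1 : ∫ x, σ' x * ⇑(l1 P hP) x ∂ν
        = ∫ x, (P.rnDeriv ν x).toReal • σ' x ∂ν := by
      refine integral_congr_ae ?_
      filter_upwards [MemLp.coeFn_toLp (hmemdens P hP)] with x e1
      rw [smul_eq_mul, mul_comm ((P.rnDeriv ν x).toReal) (σ' x)]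
      first
        | rfl
        | (congr 1; exact e1)
        | congr 1
    rw [h1, integral_rnDeriv_smul hPν]
  -- final function
  refine ⟨fun x => K⁻¹ * σ' x, hσ'm.const_mul _, ?_, u / K - ε ^ 2 / 2, ?_, ?_⟩
  · intro x
    rw [abs_mul, abs_of_pos (by positivity : (0:ℝ) < K⁻¹)]
    calc K⁻¹ * |σ' x| ≤ K⁻¹ * K := by
          exact mul_le_mul_of_nonneg_left (hσ'b x) (by positivity)
      _ = 1 := inv_mul_cancel₀ hK0.ne'
  · intro P hP
    haveI := h0p P hP
    have h1 : ∫ x, K⁻¹ * σ' x ∂P = K⁻¹ * ∫ x, σ' x ∂P :=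
      MeasureTheory.integral_const_mul _ _
    rw [h1, hmean P (h0p P hP) (h0ν P hP)]
    have h2 := hgap _ (hl1mem0 P hP)
    calc K⁻¹ * f (l1 P (h0p P hP)) ≤ K⁻¹ * (u - ε ^ 2 / 2 * K) :=
          mul_le_mul_of_nonneg_left h2 (by positivity)
      _ = u / K - ε ^ 2 / 2 := by
          field_simp
  · intro Q hQ
    haveI := h1p Q hQ
    have h1 : ∫ x, K⁻¹ * σ' x ∂Q = K⁻¹ * ∫ x, σ' x ∂Q :=
      MeasureTheory.integral_const_mul _ _
    rw [h1, hmean Q (h1p Q hQ) (h1ν Q hQ)]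
    have h2 := hfC1 _ (hl1mem1 Q hQ)
    calc u / K - ε ^ 2 / 2 + ε ^ 2 / 2 = K⁻¹ * u := by
          field_simp
          ring
      _ ≤ K⁻¹ * f (l1 Q (h1p Q hQ)) := mul_le_mul_of_nonneg_left h2 (by positivity)
end part6

section part7
variable {X : Type*} [MeasurableSpace X]

private lemma aux_exists_good_test (μ : Measure X) [SigmaFinite μ] (M0 M1 : Set (Measure X))
    (h0p : ∀ P ∈ M0, IsProbabilityMeasure P) (h0d : ∀ P ∈ M0, P ≪ μ)
    (h1p : ∀ Q ∈ M1, IsProbabilityMeasure Q) (h1d : ∀ Q ∈ M1, Q ≪ μ)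
    (hconv0 : ∀ P ∈ M0, ∀ Q ∈ M0, ∀ t : ℝ, 0 ≤ t → t ≤ 1 →
      (ENNReal.ofReal t • P + ENNReal.ofReal (1 - t) • Q) ∈ M0)
    (hconv1 : ∀ P ∈ M1, ∀ Q ∈ M1, ∀ t : ℝ, 0 ≤ t → t ≤ 1 →
      (ENNReal.ofReal t • P + ENNReal.ofReal (1 - t) • Q) ∈ M1)
    {ε : ℝ} (hε : 0 < ε)
    (hsep : ∀ P ∈ M0, ∀ Q ∈ M1, ε ≤ hellingerDist' μ P Q) :
    ∃ c > (0:ℝ), ∃ φ : (n : ℕ) → (Fin n → X) → Bool, (∀ n, Measurable (φ n)) ∧ ∀ n : ℕ,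
      (⨆ P ∈ M0, Measure.pi (fun _ : Fin n => P) {x | φ n x = true})
          ≤ ENNReal.ofReal (Real.exp (-c * n * ε ^ 2)) ∧
      (⨆ Q ∈ M1, Measure.pi (fun _ : Fin n => Q) {x | φ n x = false})
          ≤ ENNReal.ofReal (Real.exp (-c * n * ε ^ 2)) := by
  rcases M0.eq_empty_or_nonempty with h0e | h0ne
  · refine ⟨1, one_pos, fun _ _ => true, fun _ => measurable_const, fun n => ⟨?_, ?_⟩⟩
    · simp [h0e]
    · refine iSup₂_le fun Q _ => ?_
      have hempty : {x : Fin n → X | (true : Bool) = false} = ∅ := by simp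
      rw [hempty, measure_empty]
      exact zero_le
  rcases M1.eq_empty_or_nonempty with h1e | h1ne
  · refine ⟨1, one_pos, fun _ _ => false, fun _ => measurable_const, fun n => ⟨?_, ?_⟩⟩
    · refine iSup₂_le fun P _ => ?_
      have hempty : {x : Fin n → X | (false : Bool) = true} = ∅ := by simp
      rw [hempty, measure_empty]
      exact zero_le
    · simp [h1e]
  obtain ⟨σ, hσm, hσb, a, hm0, hm1⟩ := aux_exists_sep_fun μ M0 M1 h0p h0d h1p h1d
    hconv0 hconv1 h0ne h1ne hε hsep
  obtain ⟨c, hc0, φ, hφm, hφ⟩ := aux_test_of_sep M0 M1 h0p h1p σ hσm hσb a (ε ^ 2 / 2)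
    (by positivity) hm0 hm1
  refine ⟨c / ε ^ 2, by positivity, φ, hφm, fun n => ?_⟩
  have hrw : -(c / ε ^ 2) * (n:ℝ) * ε ^ 2 = -(c * n) := by
    field_simp
  rw [hrw]
  exact hφ n

end part7

/-- **Identifiable observable hypotheses reduce to classical testing theory.**
Let `Φ : W → M` parameterize a family dominated by a σ-finite measure `μ`,
let `f = T ∘ Φ` be an identifiable observable, and let `A, B` be disjoint.
Set `M0 = {P_w : T(P_w) ∈ A}`, `M1 = {P_w : T(P_w) ∈ B}`; if `M0, M1` are
convex and `ε`-separated in Hellinger distance for some `ε > 0`, then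
`M0 ∩ M1 = ∅`, there exist `c > 0` and tests with both worst-case errors at
most `exp(−cnε²)`, and in particular a uniformly consistent sequence of
tests exists. -/
theorem identifiable_observable_hypotheses_testable
    {X : Type*} [MeasurableSpace X] {W : Type*} {k : ℕ}
    (μ : Measure X) [SigmaFinite μ]
    (Φ : W → Measure X) (hΦprob : ∀ w, IsProbabilityMeasure (Φ w))
    (hΦdom : ∀ w, Φ w ≪ μ)
    (f : W → (Fin k → ℝ)) (T : Measure X → (Fin k → ℝ))
    (hid : ∀ w, f w = T (Φ w))
    (A B : Set (Fin k → ℝ)) (hAB : Disjoint A B)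
    (hconv0 : ∀ P ∈ {P | ∃ w, P = Φ w ∧ T (Φ w) ∈ A},
      ∀ Q ∈ {P | ∃ w, P = Φ w ∧ T (Φ w) ∈ A}, ∀ t : ℝ, 0 ≤ t → t ≤ 1 →
      (ENNReal.ofReal t • P + ENNReal.ofReal (1 - t) • Q)
        ∈ {P | ∃ w, P = Φ w ∧ T (Φ w) ∈ A})
    (hconv1 : ∀ P ∈ {P | ∃ w, P = Φ w ∧ T (Φ w) ∈ B},
      ∀ Q ∈ {P | ∃ w, P = Φ w ∧ T (Φ w) ∈ B}, ∀ t : ℝ, 0 ≤ t → t ≤ 1 →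
      (ENNReal.ofReal t • P + ENNReal.ofReal (1 - t) • Q)
        ∈ {P | ∃ w, P = Φ w ∧ T (Φ w) ∈ B})
    (ε : ℝ) (hε : 0 < ε)
    (hsep : ∀ P ∈ {P | ∃ w, P = Φ w ∧ T (Φ w) ∈ A},
            ∀ Q ∈ {P | ∃ w, P = Φ w ∧ T (Φ w) ∈ B},
            ε ≤ hellingerDist' μ P Q) :
    {P | ∃ w, P = Φ w ∧ T (Φ w) ∈ A} ∩ {P | ∃ w, P = Φ w ∧ T (Φ w) ∈ B} = ∅ ∧
    (∃ c > (0 : ℝ), ∃ φ : (n : ℕ) → (Fin n → X) → Bool,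
      (∀ n, Measurable (φ n)) ∧
      (∀ n : ℕ,
        (⨆ P ∈ {P | ∃ w, P = Φ w ∧ T (Φ w) ∈ A},
            Measure.pi (fun _ : Fin n => P) {x | φ n x = true})
          ≤ ENNReal.ofReal (Real.exp (-c * n * ε ^ 2)) ∧
        (⨆ Q ∈ {P | ∃ w, P = Φ w ∧ T (Φ w) ∈ B},
            Measure.pi (fun _ : Fin n => Q) {x | φ n x = false})
          ≤ ENNReal.ofReal (Real.exp (-c * n * ε ^ 2)))) ∧
    (∃ φ : (n : ℕ) → (Fin n → X) → Bool,
      (∀ n, Measurable (φ n)) ∧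
      Tendsto (fun n => ⨆ P ∈ {P | ∃ w, P = Φ w ∧ T (Φ w) ∈ A},
          Measure.pi (fun _ : Fin n => P) {x | φ n x = true}) atTop (nhds 0) ∧
      Tendsto (fun n => ⨆ Q ∈ {P | ∃ w, P = Φ w ∧ T (Φ w) ∈ B},
          Measure.pi (fun _ : Fin n => Q) {x | φ n x = false}) atTop (nhds 0)) := by
  
  classical
  have h0p : ∀ P ∈ {P | ∃ w, P = Φ w ∧ T (Φ w) ∈ A}, IsProbabilityMeasure P := by
    rintro P ⟨w, rfl, -⟩
    exact hΦprob w
  have h0d : ∀ P ∈ {P | ∃ w, P = Φ w ∧ T (Φ w) ∈ A}, P ≪ μ := by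
    rintro P ⟨w, rfl, -⟩
    exact hΦdom w
  have h1p : ∀ Q ∈ {P | ∃ w, P = Φ w ∧ T (Φ w) ∈ B}, IsProbabilityMeasure Q := by
    rintro Q ⟨w, rfl, -⟩
    exact hΦprob w
  have h1d : ∀ Q ∈ {P | ∃ w, P = Φ w ∧ T (Φ w) ∈ B}, Q ≪ μ := by
    rintro Q ⟨w, rfl, -⟩
    exact hΦdom w
  have key := aux_exists_good_test μ _ _ h0p h0d h1p h1d hconv0 hconv1 hε hsep
  refine ⟨?_, key, ?_⟩
  · refine Set.eq_empty_iff_forall_notMem.mpr ?_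
    rintro P ⟨⟨w1, hw1, hA1⟩, ⟨w2, hw2, hB2⟩⟩
    have hE : Φ w1 = Φ w2 := by rw [← hw1, ← hw2]
    have hT : T (Φ w1) = T (Φ w2) := by rw [hE]
    exact Set.disjoint_left.mp hAB hA1 (hT ▸ hB2)
  · obtain ⟨c, hc0, φ, hφm, hφ⟩ := key
    have hlim : Tendsto (fun n : ℕ => ENNReal.ofReal (Real.exp (-c * n * ε ^ 2)))
        atTop (nhds 0) := by
      have h2 : Tendsto (fun n : ℕ => ((c * ε ^ 2) * n : ℝ)) atTop atTop :=
        Tendsto.const_mul_atTop (by positivity) tendsto_natCast_atTop_atTop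
      have h3 : Tendsto (fun n : ℕ => (-((c * ε ^ 2) * n) : ℝ)) atTop atBot :=
        tendsto_neg_atTop_atBot.comp h2
      have h1 : Tendsto (fun n : ℕ => (-c * n * ε ^ 2 : ℝ)) atTop atBot :=
        h3.congr (fun n => by ring)
      have h4 : Tendsto (fun n : ℕ => Real.exp (-c * n * ε ^ 2)) atTop (nhds 0) :=
        Real.tendsto_exp_atBot.comp h1
      have h5 := (ENNReal.continuous_ofReal.tendsto 0).comp h4
      simpa [Function.comp_def] using h5
    exact ⟨φ, hφm, tendsto_of_tendsto_of_tendsto_of_le_of_le tendsto_const_nhds hlim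
        (fun n => zero_le) (fun n => (hφ n).1),
      tendsto_of_tendsto_of_tendsto_of_le_of_le tendsto_const_nhds hlim
        (fun n => zero_le) (fun n => (hφ n).2)⟩
end

section
/- Let X be a measurable space and let M0, M1 be sets of probability measures on X, all dominated by a σ-finite measure μ, and suppose inf_{P ∈ M0, Q ∈ M1} h(P, Q) = 0. Then for every sample size n and every test φ : Xⁿ → {0,1}, the worst-case errors satisfy α_n(φ) + β_n(φ) ≥ 1, where α_n(φ) = sup_{P ∈ M0} Pⁿ(φ = 1) and β_n(φ) = sup_{Q ∈ M1} Qⁿ(φ = 0). In particular, no sequence of tests φ_n satisfies both α_n(φ_n) → 0 and β_n(φ_n) → 0. -/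
open MeasureTheory Filter Set
open scoped ENNReal

lemma lintegral_pi_prod' {X : Type*} [MeasurableSpace X] (μ : Measure X) [SigmaFinite μ] :
    ∀ {n : ℕ} (f : Fin n → X → ℝ≥0∞), (∀ i, Measurable (f i)) →
    ∫⁻ x : Fin n → X, ∏ i, f i (x i) ∂(Measure.pi fun _ => μ) = ∏ i, ∫⁻ x, f i x ∂μ := by
  intro n
  induction n with
  | zero =>
    intro f _
    simp [lintegral_const, Measure.pi_univ]
  | succ n ih =>
    intro f hf
    rw [← ((measurePreserving_piFinSuccAbove (fun _ : Fin (n+1) => μ) 0).symm).lintegral_comp_emb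
      (MeasurableEquiv.measurableEmbedding _)]
    have heq : ∀ z : X × (Fin n → X),
        (∏ i, f i (((MeasurableEquiv.piFinSuccAbove (fun _ : Fin (n+1) => X) 0).symm z) i))
          = f 0 z.1 * ∏ j : Fin n, f j.succ (z.2 j) := by
      intro z
      simp_rw [MeasurableEquiv.piFinSuccAbove_symm_apply, Fin.insertNthEquiv,
        Equiv.coe_fn_mk, Fin.insertNth_zero, Fin.prod_univ_succ, Fin.cons_zero, Fin.cons_succ]
      simp [Fin.zero_succAbove]
    simp_rw [heq]
    have h2 : Measurable (fun y : Fin n → X => ∏ j : Fin n, f j.succ (y j)) :=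
      Finset.measurable_prod Finset.univ
        (fun (j : Fin n) _ => (hf j.succ).comp (measurable_pi_apply j))
    calc ∫⁻ z : X × (Fin n → X), f 0 z.1 * ∏ j : Fin n, f j.succ (z.2 j)
          ∂(μ.prod (Measure.pi fun _ => μ))
        = (∫⁻ x, f 0 x ∂μ) *
            ∫⁻ y : Fin n → X, ∏ j : Fin n, f j.succ (y j) ∂(Measure.pi fun _ => μ) :=
          lintegral_prod_mul (hf 0).aemeasurable h2.aemeasurable
      _ = ∏ i : Fin (n+1), ∫⁻ x, f i x ∂μ := by
          rw [ih (fun j => f j.succ) (fun j => hf j.succ), Fin.prod_univ_succ]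

lemma pi_withDensity' {X : Type*} [MeasurableSpace X] (μ : Measure X) [SigmaFinite μ]
    {f : X → ℝ≥0∞} (hf : Measurable f) [SigmaFinite (μ.withDensity f)] (n : ℕ) :
    Measure.pi (fun _ : Fin n => μ.withDensity f)
      = (Measure.pi fun _ : Fin n => μ).withDensity (fun x => ∏ i, f (x i)) := by
  refine Eq.symm (Measure.pi_eq (μ := fun _ : Fin n => μ.withDensity f)
    (μ' := (Measure.pi fun _ : Fin n => μ).withDensity (fun x => ∏ i, f (x i))) fun s hs => ?_).symm
  have hF : Measurable (fun x : Fin n → X => ∏ i, f (x i)) :=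
    Finset.measurable_prod Finset.univ (fun i _ => hf.comp (measurable_pi_apply i))
  rw [withDensity_apply _ (MeasurableSet.univ_pi hs), ← lintegral_indicator
    (MeasurableSet.univ_pi hs)]
  have : ∀ x : Fin n → X, (univ.pi s).indicator (fun x => ∏ i, f (x i)) x
      = ∏ i, (s i).indicator f (x i) := by
    intro x
    by_cases hx : x ∈ univ.pi s
    · rw [indicator_of_mem hx]
      exact Finset.prod_congr rfl fun i _ => (indicator_of_mem (hx i trivial) f).symm
    · rw [indicator_of_notMem hx]
      rw [Set.mem_pi] at hx
      push_neg at hx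
      obtain ⟨i, -, hi⟩ := hx
      exact (Finset.prod_eq_zero (Finset.mem_univ i)
        (by rw [indicator_of_notMem hi])).symm
  simp_rw [this]
  rw [lintegral_pi_prod' μ (fun i => (s i).indicator f) (fun i => hf.indicator (hs i))]
  exact Finset.prod_congr rfl fun i _ => by rw [lintegral_indicator (hs i), withDensity_apply _ (hs i)]

/-- Real affinity is at least `1 - ε²` when Hellinger distance is `< ε`. -/
lemma affinity_lower {X : Type*} [MeasurableSpace X] (μ : Measure X) [SigmaFinite μ]
    (P Q : Measure X) [IsProbabilityMeasure P] [IsProbabilityMeasure Q]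
    (hP : P ≪ μ) (hQ : Q ≪ μ) {ε : ℝ} (hε : 0 < ε) (hH : hellingerDist' μ P Q < ε) :
    1 - ε ^ 2 ≤ ∫ x, Real.sqrt ((P.rnDeriv μ x).toReal) *
      Real.sqrt ((Q.rnDeriv μ x).toReal) ∂μ := by
  set pr := fun x => (P.rnDeriv μ x).toReal with hprdef
  set qr := fun x => (Q.rnDeriv μ x).toReal with hqrdef
  have hpmeas : Measurable (P.rnDeriv μ) := Measure.measurable_rnDeriv _ _
  have hqmeas : Measurable (Q.rnDeriv μ) := Measure.measurable_rnDeriv _ _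
  have hpr : Integrable pr μ := Measure.integrable_toReal_rnDeriv
  have hqr : Integrable qr μ := Measure.integrable_toReal_rnDeriv
  have hipr : ∫ x, pr x ∂μ = 1 := by
    rw [hprdef, Measure.integral_toReal_rnDeriv hP]; simp
  have hiqr : ∫ x, qr x ∂μ = 1 := by
    rw [hqrdef, Measure.integral_toReal_rnDeriv hQ]; simp
  have hgmeas : Measurable (fun x => Real.sqrt (pr x) * Real.sqrt (qr x)) :=
    (hpmeas.ennreal_toReal.sqrt).mul (hqmeas.ennreal_toReal.sqrt)
  have hgbound : ∀ x, ‖Real.sqrt (pr x) * Real.sqrt (qr x)‖ ≤ (pr x + qr x) / 2 := by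
    intro x
    rw [Real.norm_eq_abs, abs_of_nonneg (mul_nonneg (Real.sqrt_nonneg _) (Real.sqrt_nonneg _))]
    nlinarith [Real.sq_sqrt (ENNReal.toReal_nonneg : (0:ℝ) ≤ pr x),
      Real.sq_sqrt (ENNReal.toReal_nonneg : (0:ℝ) ≤ qr x),
      sq_nonneg (Real.sqrt (pr x) - Real.sqrt (qr x))]
  have hg : Integrable (fun x => Real.sqrt (pr x) * Real.sqrt (qr x)) μ :=
    Integrable.mono' ((hpr.add hqr).div_const 2) hgmeas.aestronglyMeasurable
      (Filter.Eventually.of_forall hgbound)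
  -- Hellinger gives a bound on S
  have hSnonneg : (0:ℝ) ≤ ∫ x, (Real.sqrt (pr x) - Real.sqrt (qr x)) ^ 2 ∂μ :=
    integral_nonneg fun x => sq_nonneg _
  have hS : (1/2) * ∫ x, (Real.sqrt (pr x) - Real.sqrt (qr x)) ^ 2 ∂μ < ε ^ 2 := by
    have := hH
    rw [hellingerDist'] at this
    exact (Real.sqrt_lt' hε).mp this
  -- expand the square
  have hexp : (fun x => (Real.sqrt (pr x) - Real.sqrt (qr x)) ^ 2)
      = fun x => pr x + qr x - 2 * (Real.sqrt (pr x) * Real.sqrt (qr x)) := by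
    funext x
    rw [sub_sq, Real.sq_sqrt ENNReal.toReal_nonneg, Real.sq_sqrt ENNReal.toReal_nonneg]
    ring
  have hScalc : ∫ x, (Real.sqrt (pr x) - Real.sqrt (qr x)) ^ 2 ∂μ
      = 2 - 2 * ∫ x, Real.sqrt (pr x) * Real.sqrt (qr x) ∂μ := by
    have h12 : Integrable (fun x => pr x + qr x) μ := hpr.add hqr
    have h3 : Integrable (fun x => 2 * (Real.sqrt (pr x) * Real.sqrt (qr x))) μ := hg.const_mul 2
    rw [hexp, integral_sub h12 h3, integral_add hpr hqr, MeasureTheory.integral_const_mul, hipr, hiqr]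
    ring
  rw [hScalc] at hS
  linarith

/-- ENNReal affinity equals ofReal of the real affinity. -/
lemma affinity_eq {X : Type*} [MeasurableSpace X] (μ : Measure X) [SigmaFinite μ]
    (P Q : Measure X) [IsProbabilityMeasure P] [IsProbabilityMeasure Q] :
    ∫⁻ x, (P.rnDeriv μ x * Q.rnDeriv μ x) ^ (1/2 : ℝ) ∂μ
      = ENNReal.ofReal (∫ x, Real.sqrt ((P.rnDeriv μ x).toReal) *
          Real.sqrt ((Q.rnDeriv μ x).toReal) ∂μ) := by
  have hpmeas : Measurable (P.rnDeriv μ) := Measure.measurable_rnDeriv _ _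
  have hqmeas : Measurable (Q.rnDeriv μ) := Measure.measurable_rnDeriv _ _
  have hgmeas : Measurable (fun x => Real.sqrt ((P.rnDeriv μ x).toReal) *
      Real.sqrt ((Q.rnDeriv μ x).toReal)) :=
    (hpmeas.ennreal_toReal.sqrt).mul (hqmeas.ennreal_toReal.sqrt)
  have hgbound : ∀ x, ‖Real.sqrt ((P.rnDeriv μ x).toReal) *
      Real.sqrt ((Q.rnDeriv μ x).toReal)‖ ≤
      ((P.rnDeriv μ x).toReal + (Q.rnDeriv μ x).toReal) / 2 := by
    intro x
    rw [Real.norm_eq_abs, abs_of_nonneg (mul_nonneg (Real.sqrt_nonneg _) (Real.sqrt_nonneg _))]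
    nlinarith [Real.sq_sqrt (ENNReal.toReal_nonneg : (0:ℝ) ≤ (P.rnDeriv μ x).toReal),
      Real.sq_sqrt (ENNReal.toReal_nonneg : (0:ℝ) ≤ (Q.rnDeriv μ x).toReal),
      sq_nonneg (Real.sqrt ((P.rnDeriv μ x).toReal) - Real.sqrt ((Q.rnDeriv μ x).toReal))]
  have hg : Integrable (fun x => Real.sqrt ((P.rnDeriv μ x).toReal) *
      Real.sqrt ((Q.rnDeriv μ x).toReal)) μ :=
    Integrable.mono' ((Measure.integrable_toReal_rnDeriv.add
      Measure.integrable_toReal_rnDeriv).div_const 2) hgmeas.aestronglyMeasurable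
      (Filter.Eventually.of_forall hgbound)
  rw [ofReal_integral_eq_lintegral_ofReal hg (Filter.Eventually.of_forall fun x =>
    mul_nonneg (Real.sqrt_nonneg _) (Real.sqrt_nonneg _))]
  refine lintegral_congr_ae ?_
  filter_upwards [Measure.rnDeriv_lt_top P μ, Measure.rnDeriv_lt_top Q μ] with x hpx hqx
  have hmul : P.rnDeriv μ x * Q.rnDeriv μ x ≠ ∞ :=
    ENNReal.mul_ne_top hpx.ne hqx.ne
  rw [← ENNReal.ofReal_toReal (ENNReal.rpow_ne_top_of_nonneg (by norm_num) hmul),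
    ← ENNReal.toReal_rpow, ENNReal.toReal_mul]
  congr 1
  rw [Real.mul_rpow ENNReal.toReal_nonneg ENNReal.toReal_nonneg,
    ← Real.sqrt_eq_rpow, ← Real.sqrt_eq_rpow]

lemma key_ineq {X : Type*} [MeasurableSpace X] (μ : Measure X) [SigmaFinite μ]
    (P Q : Measure X) [IsProbabilityMeasure P] [IsProbabilityMeasure Q]
    (hP : P ≪ μ) (hQ : Q ≪ μ) {ε : ℝ} (hε : 0 < ε) (hH : hellingerDist' μ P Q < ε)
    (n : ℕ) (A : Set (Fin n → X)) (hA : MeasurableSet A) :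
    1 ≤ Measure.pi (fun _ : Fin n => P) A + Measure.pi (fun _ : Fin n => Q) Aᶜ
        + ENNReal.ofReal (Real.sqrt (2 * n) * ε) := by
  set p := P.rnDeriv μ with hpdef
  set q := Q.rnDeriv μ with hqdef
  have hpmeas : Measurable p := Measure.measurable_rnDeriv _ _
  have hqmeas : Measurable q := Measure.measurable_rnDeriv _ _
  set μn := Measure.pi (fun _ : Fin n => μ) with hμndef
  set F := fun x : Fin n → X => ∏ i, p (x i) with hFdef
  set G := fun x : Fin n → X => ∏ i, q (x i) with hGdef
  have hFmeas : Measurable F :=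
    Finset.measurable_prod Finset.univ (fun i _ => hpmeas.comp (measurable_pi_apply i))
  have hGmeas : Measurable G :=
    Finset.measurable_prod Finset.univ (fun i _ => hqmeas.comp (measurable_pi_apply i))
  -- rewrite the product measures using densities
  haveI hsfP : SigmaFinite (μ.withDensity p) := by
    rw [hpdef, Measure.withDensity_rnDeriv_eq _ _ hP]; infer_instance
  haveI hsfQ : SigmaFinite (μ.withDensity q) := by
    rw [hqdef, Measure.withDensity_rnDeriv_eq _ _ hQ]; infer_instance
  have hPpi : Measure.pi (fun _ : Fin n => P) = μn.withDensity F := by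
    conv_lhs => rw [show (fun _ : Fin n => P) = fun _ => μ.withDensity p from
      funext fun _ => (Measure.withDensity_rnDeriv_eq _ _ hP).symm]
    exact pi_withDensity' μ hpmeas n
  have hQpi : Measure.pi (fun _ : Fin n => Q) = μn.withDensity G := by
    conv_lhs => rw [show (fun _ : Fin n => Q) = fun _ => μ.withDensity q from
      funext fun _ => (Measure.withDensity_rnDeriv_eq _ _ hQ).symm]
    exact pi_withDensity' μ hqmeas n
  have hPA : Measure.pi (fun _ : Fin n => P) A = ∫⁻ x in A, F x ∂μn := by
    rw [hPpi, withDensity_apply _ hA]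
  have hQAc : Measure.pi (fun _ : Fin n => Q) Aᶜ = ∫⁻ x in Aᶜ, G x ∂μn := by
    rw [hQpi, withDensity_apply _ hA.compl]
  -- totals
  have hint_p : ∫⁻ x, p x ∂μ = 1 := by
    rw [hpdef, Measure.lintegral_rnDeriv hP]; simp
  have hint_q : ∫⁻ x, q x ∂μ = 1 := by
    rw [hqdef, Measure.lintegral_rnDeriv hQ]; simp
  have hF1 : ∫⁻ x, F x ∂μn = 1 := by
    rw [hFdef, hμndef, lintegral_pi_prod' μ (fun _ => p) (fun _ => hpmeas)]
    simp [hint_p]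
  have hG1 : ∫⁻ x, G x ∂μn = 1 := by
    rw [hGdef, hμndef, lintegral_pi_prod' μ (fun _ => q) (fun _ => hqmeas)]
    simp [hint_q]
  set m := ∫⁻ x, min (F x) (G x) ∂μn with hmdef
  set Mx := ∫⁻ x, max (F x) (G x) ∂μn with hMdef
  have hm_le : m ≤ Measure.pi (fun _ : Fin n => P) A + Measure.pi (fun _ : Fin n => Q) Aᶜ := by
    rw [hPA, hQAc, hmdef, ← lintegral_add_compl (fun x => min (F x) (G x)) hA]
    exact add_le_add (lintegral_mono fun x => min_le_left _ _)
      (lintegral_mono fun x => min_le_right _ _)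
  have hm_le_one : m ≤ 1 := by
    rw [← hF1]; exact lintegral_mono fun x => min_le_left _ _
  have hsum : m + Mx = 2 := by
    rw [hmdef, hMdef, ← lintegral_add_left (hFmeas.min hGmeas)]
    have : ∀ x, min (F x) (G x) + max (F x) (G x) = F x + G x := fun x => min_add_max _ _
    simp_rw [this]
    rw [lintegral_add_left hFmeas, hF1, hG1]
    norm_num
  have hMx_le : Mx ≤ 2 := le_trans le_add_self (le_of_eq hsum)
  -- affinity at product level
  set ρ := ∫⁻ x, (p x * q x) ^ (1/2 : ℝ) ∂μ with hρdef
  have hprod_aff : ∫⁻ x, ((F x) * (G x)) ^ (1/2 : ℝ) ∂μn = ρ ^ n := by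
    have : ∀ x : Fin n → X, ((F x) * (G x)) ^ (1/2 : ℝ)
        = ∏ i, (p (x i) * q (x i)) ^ (1/2 : ℝ) := by
      intro x
      rw [hFdef, hGdef, ← Finset.prod_mul_distrib,
        ← ENNReal.prod_rpow_of_nonneg (by norm_num : (0:ℝ) ≤ 1/2)]
    simp_rw [this]
    rw [hμndef, lintegral_pi_prod' μ (fun _ x => (p x * q x) ^ (1/2 : ℝ))
      (fun _ => (hpmeas.mul hqmeas).pow_const _)]
    simp [hρdef]
  -- Cauchy-Schwarz
  have hCS : ρ ^ n ≤ m ^ (1/2 : ℝ) * Mx ^ (1/2 : ℝ) := by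
    rw [← hprod_aff]
    have h22 : Real.HolderConjugate 2 2 := Real.HolderConjugate.two_two
    have := ENNReal.lintegral_mul_le_Lp_mul_Lq μn h22
      (f := fun x => (min (F x) (G x)) ^ (1/2 : ℝ))
      (g := fun x => (max (F x) (G x)) ^ (1/2 : ℝ))
      ((hFmeas.min hGmeas).pow_const _).aemeasurable
      ((hFmeas.max hGmeas).pow_const _).aemeasurable
    have heq2 : ∀ y : ℝ≥0∞, (y ^ (1/2 : ℝ)) ^ (2 : ℝ) = y := by
      intro y
      rw [← ENNReal.rpow_mul]
      norm_num
    calc ∫⁻ x, ((F x) * (G x)) ^ (1/2 : ℝ) ∂μn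
        = ∫⁻ x, (min (F x) (G x)) ^ (1/2 : ℝ) * (max (F x) (G x)) ^ (1/2 : ℝ) ∂μn := by
          refine lintegral_congr fun x => ?_
          rw [← ENNReal.mul_rpow_of_nonneg _ _ (by norm_num : (0:ℝ) ≤ 1/2), min_mul_max]
      _ ≤ (∫⁻ x, ((min (F x) (G x)) ^ (1/2 : ℝ)) ^ (2:ℝ) ∂μn) ^ (1/(2:ℝ))
            * (∫⁻ x, ((max (F x) (G x)) ^ (1/2 : ℝ)) ^ (2:ℝ) ∂μn) ^ (1/(2:ℝ)) := this
      _ = m ^ (1/2 : ℝ) * Mx ^ (1/2 : ℝ) := by simp_rw [heq2]; rfl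
  -- convert to reals
  have hm_ne_top : m ≠ ∞ := (lt_of_le_of_lt hm_le_one ENNReal.one_lt_top).ne
  have hMx_ne_top : Mx ≠ ∞ := (lt_of_le_of_lt hMx_le (by norm_num)).ne
  set a := m.toReal with hadef
  set b := Mx.toReal with hbdef
  have hab : a + b = 2 := by
    rw [hadef, hbdef, ← ENNReal.toReal_add hm_ne_top hMx_ne_top, hsum]
    norm_num
  have ha_nonneg : (0:ℝ) ≤ a := ENNReal.toReal_nonneg
  have hb_nonneg : (0:ℝ) ≤ b := ENNReal.toReal_nonneg
  have ha_le_one : a ≤ 1 := by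
    rw [hadef, ← ENNReal.toReal_one]
    exact ENNReal.toReal_mono ENNReal.one_ne_top hm_le_one
  -- real affinity
  set ρR := ∫ x, Real.sqrt ((P.rnDeriv μ x).toReal) * Real.sqrt ((Q.rnDeriv μ x).toReal) ∂μ
    with hρRdef
  have hρR_nonneg : 0 ≤ ρR :=
    integral_nonneg fun x => mul_nonneg (Real.sqrt_nonneg _) (Real.sqrt_nonneg _)
  have hρeq : ρ = ENNReal.ofReal ρR := by
    rw [hρdef, hρRdef, hpdef, hqdef]
    exact affinity_eq μ P Q
  have hρR_lower : 1 - ε ^ 2 ≤ ρR := affinity_lower μ P Q hP hQ hε hH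
  have hρR_le_one : ρR ≤ 1 := by
    have h1 : ρ ≤ 1 := by
      have := ENNReal.lintegral_mul_le_Lp_mul_Lq μ
        (Real.HolderConjugate.two_two : Real.HolderConjugate 2 2)
        (f := fun x => (p x) ^ (1/2 : ℝ)) (g := fun x => (q x) ^ (1/2 : ℝ))
        (hpmeas.pow_const _).aemeasurable (hqmeas.pow_const _).aemeasurable
      have heq2 : ∀ y : ℝ≥0∞, (y ^ (1/2 : ℝ)) ^ (2 : ℝ) = y := by
        intro y; rw [← ENNReal.rpow_mul]; norm_num
      calc ρ = ∫⁻ x, (p x) ^ (1/2:ℝ) * (q x) ^ (1/2:ℝ) ∂μ := by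
              refine lintegral_congr fun x => ?_
              rw [← ENNReal.mul_rpow_of_nonneg _ _ (by norm_num : (0:ℝ) ≤ 1/2)]
        _ ≤ (∫⁻ x, ((p x) ^ (1/2:ℝ)) ^ (2:ℝ) ∂μ) ^ (1/(2:ℝ))
              * (∫⁻ x, ((q x) ^ (1/2:ℝ)) ^ (2:ℝ) ∂μ) ^ (1/(2:ℝ)) := this
        _ = 1 := by simp_rw [heq2]; rw [hint_p, hint_q]; simp
    rw [hρeq] at h1
    exact_mod_cast (ENNReal.ofReal_le_one.mp h1)
  -- transfer Cauchy-Schwarz to reals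
  have hCSreal : ρR ^ n ≤ Real.sqrt a * Real.sqrt b := by
    have := ENNReal.toReal_mono (by
        exact ENNReal.mul_ne_top (ENNReal.rpow_ne_top_of_nonneg (by norm_num) hm_ne_top)
          (ENNReal.rpow_ne_top_of_nonneg (by norm_num) hMx_ne_top)) hCS
    rw [ENNReal.toReal_mul, ← ENNReal.toReal_rpow, ← ENNReal.toReal_rpow, ENNReal.toReal_pow,
      hρeq, ENNReal.toReal_ofReal hρR_nonneg] at this
    calc ρR ^ n ≤ a ^ (1/2:ℝ) * b ^ (1/2:ℝ) := this
      _ = Real.sqrt a * Real.sqrt b := by rw [← Real.sqrt_eq_rpow, ← Real.sqrt_eq_rpow]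
  -- algebra: (1-a)^2 ≤ 2n ε²
  have hsq : (1 - a) ^ 2 ≤ 2 * n * ε ^ 2 := by
    have h1 : ρR ^ (2 * n) ≤ a * b := by
      have := mul_self_le_mul_self (pow_nonneg hρR_nonneg n) hCSreal
      calc ρR ^ (2*n) = ρR ^ n * ρR ^ n := by rw [← pow_add]; ring_nf
        _ ≤ (Real.sqrt a * Real.sqrt b) * (Real.sqrt a * Real.sqrt b) := this
        _ = a * b := by
            rw [show Real.sqrt a * Real.sqrt b * (Real.sqrt a * Real.sqrt b)
              = (Real.sqrt a * Real.sqrt a) * (Real.sqrt b * Real.sqrt b) by ring,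
              Real.mul_self_sqrt ha_nonneg, Real.mul_self_sqrt hb_nonneg]
    have hbern : 1 + (2*n : ℝ) * (ρR - 1) ≤ ρR ^ (2*n) := by
      have := one_add_mul_le_pow (a := ρR - 1) (by linarith) (2*n)
      simpa using this
    have hρRεsq : 1 - ρR ≤ ε ^ 2 := by linarith
    have hab2 : a * b = 1 - (1 - a)^2 := by nlinarith [hab]
    nlinarith [hbern, h1, hρRεsq, sq_nonneg ε, Nat.cast_nonneg (α := ℝ) n]
  have ha_lower : 1 - Real.sqrt (2*n) * ε ≤ a := by
    have h2n : (0:ℝ) ≤ 2 * n := by positivity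
    have : 1 - a ≤ Real.sqrt (2*n) * ε := by
      have h1 : 1 - a ≤ |1 - a| := le_abs_self _
      have h2 : |1 - a| = Real.sqrt ((1-a)^2) := (Real.sqrt_sq_eq_abs _).symm
      have h3 : Real.sqrt ((1-a)^2) ≤ Real.sqrt (2*n*ε^2) := Real.sqrt_le_sqrt hsq
      have h4 : Real.sqrt (2*n*ε^2) = Real.sqrt (2*n) * ε := by
        rw [Real.sqrt_mul h2n, Real.sqrt_sq hε.le]
      linarith
    linarith
  -- conclude
  have hm_eq : m = ENNReal.ofReal a := (ENNReal.ofReal_toReal hm_ne_top).symm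
  calc (1 : ℝ≥0∞) = ENNReal.ofReal 1 := by simp
    _ ≤ ENNReal.ofReal (a + Real.sqrt (2*n) * ε) := ENNReal.ofReal_le_ofReal (by linarith)
    _ = ENNReal.ofReal a + ENNReal.ofReal (Real.sqrt (2*n) * ε) := by
        rw [ENNReal.ofReal_add ha_nonneg (by positivity)]
    _ ≤ (Measure.pi (fun _ : Fin n => P) A + Measure.pi (fun _ : Fin n => Q) Aᶜ)
          + ENNReal.ofReal (Real.sqrt (2*n) * ε) := by
        gcongr
        rw [← hm_eq]; exact hm_le

/-- **Non-separation obstructs testing.**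
If the Hellinger distance between the classes `M0` and `M1` (dominated by a
σ-finite `μ`) has infimum `0`, then for every sample size `n` and every test
`φ : Xⁿ → {0,1}` the worst-case errors satisfy `α_n(φ) + β_n(φ) ≥ 1`; in
particular no sequence of tests has both worst-case errors tending to `0`. -/
theorem nonseparation_obstructs_testing
    {X : Type*} [MeasurableSpace X] (μ : Measure X) [SigmaFinite μ]
    (M0 M1 : Set (Measure X))
    (hprob : ∀ P ∈ M0 ∪ M1, IsProbabilityMeasure P)
    (hdom : ∀ P ∈ M0 ∪ M1, P ≪ μ)
    (hinf : ∀ ε : ℝ, 0 < ε → ∃ P ∈ M0, ∃ Q ∈ M1, hellingerDist' μ P Q < ε) :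
    (∀ (n : ℕ) (φ : (Fin n → X) → Bool), Measurable φ →
      1 ≤ (⨆ P ∈ M0, Measure.pi (fun _ : Fin n => P) {x | φ x = true})
        + (⨆ Q ∈ M1, Measure.pi (fun _ : Fin n => Q) {x | φ x = false})) ∧
    ¬ ∃ φ : (n : ℕ) → (Fin n → X) → Bool,
        (∀ n, Measurable (φ n)) ∧
        Tendsto (fun n => ⨆ P ∈ M0,
            Measure.pi (fun _ : Fin n => P) {x | φ n x = true}) atTop (nhds 0) ∧
        Tendsto (fun n => ⨆ Q ∈ M1,
            Measure.pi (fun _ : Fin n => Q) {x | φ n x = false}) atTop (nhds 0) := by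
  have main : ∀ (n : ℕ) (φ : (Fin n → X) → Bool), Measurable φ →
      1 ≤ (⨆ P ∈ M0, Measure.pi (fun _ : Fin n => P) {x | φ x = true})
        + (⨆ Q ∈ M1, Measure.pi (fun _ : Fin n => Q) {x | φ x = false}) := by
    intro n φ hφ
    set A : Set (Fin n → X) := {x | φ x = true} with hAdef
    have hA : MeasurableSet A := hφ (measurableSet_singleton true)
    have hAc : {x | φ x = false} = Aᶜ := by
      ext x; simp [hAdef, Bool.not_eq_true]
    refine ENNReal.le_of_forall_pos_le_add fun δ hδ _ => ?_
    set ε : ℝ := (δ : ℝ) / (Real.sqrt (2*n) + 1) with hεdef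
    have hsq_nonneg : (0:ℝ) ≤ Real.sqrt (2*n) := Real.sqrt_nonneg _
    have hε : 0 < ε := div_pos (by exact_mod_cast hδ) (by linarith)
    obtain ⟨P, hPmem, Q, hQmem, hH⟩ := hinf ε hε
    haveI : IsProbabilityMeasure P := hprob P (Or.inl hPmem)
    haveI : IsProbabilityMeasure Q := hprob Q (Or.inr hQmem)
    have hPac : P ≪ μ := hdom P (Or.inl hPmem)
    have hQac : Q ≪ μ := hdom Q (Or.inr hQmem)
    have hkey := key_ineq μ P Q hPac hQac hε hH n A hA
    have hεbound : Real.sqrt (2*n) * ε ≤ (δ : ℝ) := by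
      calc Real.sqrt (2*n) * ((δ:ℝ) / (Real.sqrt (2*n) + 1))
          ≤ (Real.sqrt (2*n) + 1) * ((δ:ℝ) / (Real.sqrt (2*n) + 1)) := by
            apply mul_le_mul_of_nonneg_right (by linarith)
            positivity
        _ = (δ : ℝ) := by field_simp
    have hofReal : ENNReal.ofReal (Real.sqrt (2*n) * ε) ≤ (δ : ℝ≥0∞) := by
      calc ENNReal.ofReal (Real.sqrt (2*n) * ε) ≤ ENNReal.ofReal (δ:ℝ) :=
            ENNReal.ofReal_le_ofReal hεbound
        _ = (δ : ℝ≥0∞) := ENNReal.ofReal_coe_nnreal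
    have hsupP : Measure.pi (fun _ : Fin n => P) A
        ≤ ⨆ P ∈ M0, Measure.pi (fun _ : Fin n => P) {x | φ x = true} := by
      rw [← hAdef]
      exact le_biSup (fun P => Measure.pi (fun _ : Fin n => P) A) hPmem
    have hsupQ : Measure.pi (fun _ : Fin n => Q) Aᶜ
        ≤ ⨆ Q ∈ M1, Measure.pi (fun _ : Fin n => Q) {x | φ x = false} := by
      rw [hAc]
      exact le_biSup (fun Q => Measure.pi (fun _ : Fin n => Q) Aᶜ) hQmem
    calc (1:ℝ≥0∞) ≤ Measure.pi (fun _ : Fin n => P) A + Measure.pi (fun _ : Fin n => Q) Aᶜ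
          + ENNReal.ofReal (Real.sqrt (2*n) * ε) := hkey
      _ ≤ ((⨆ P ∈ M0, Measure.pi (fun _ : Fin n => P) {x | φ x = true})
            + (⨆ Q ∈ M1, Measure.pi (fun _ : Fin n => Q) {x | φ x = false})) + δ := by
          gcongr
  refine ⟨main, ?_⟩
  rintro ⟨φ, hmeas, h0, h1⟩
  have hsum : Tendsto (fun n => (⨆ P ∈ M0, Measure.pi (fun _ : Fin n => P) {x | φ n x = true})
      + (⨆ Q ∈ M1, Measure.pi (fun _ : Fin n => Q) {x | φ n x = false})) atTop (nhds 0) := by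
    have := h0.add h1
    simpa using this
  have hev := hsum.eventually_lt_const (by norm_num : (0:ℝ≥0∞) < 1)
  obtain ⟨n, hn⟩ := hev.exists
  exact absurd (main n (φ n) (hmeas n)) (not_le.mpr hn)
end
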